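/- Let (A, [·,·], ρ) be a Lie algebroid over M and φ ∈ Γ(A*) a 1-cocycle (meaning ρ(X)(φ(Y)) − ρ(Y)(φ(X)) − φ([X,Y]) = 0 for all sections X,Y). Then the bracket on t-dependent sections X̄(x,t) = X_t(x) defined by [X̄,Ȳ]^φ(x,t) = [X_t,Y_t](x) + φ(X_t)(x) ∂Ȳ/∂t − φ(Y_t)(x) ∂X̄/∂t is skew-symmetric and satisfies the Jacobi identity. -/
import Mathlib


/-- let `(A,[·,·],ρ)` be a Lie algebroid over `M` (sections `L`, a Lie
algebra over ℝ which is a module over the functions `C = C^∞(M)`, anchor `ρ` acting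
by derivations, satisfying the Leibniz rule) and `φ ∈ Γ(A*)` a 1-cocycle.  Then on
t-dependent sections `X̄(t) = X_t` (with `δ` the derivative `∂/∂t`, acting
componentwise and satisfying the usual Leibniz rules) the bracket
`[X̄,Ȳ]^φ(t) = [X_t,Y_t] + φ(X_t)·δȲ(t) − φ(Y_t)·δX̄(t)`
is skew-symmetric and satisfies the Jacobi identity. -/
theorem algebroid_cocycle_time_dependent_bracket
    (C : Type*) [CommRing C] [Algebra ℝ C]
    (L : Type*) [LieRing L] [LieAlgebra ℝ L] [Module C L] [IsScalarTower ℝ C L]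
    -- anchor, a morphism of Lie algebras into derivations of the functions
    (ρ : L →ₗ[ℝ] Derivation ℝ C C)
    (hρ : ∀ X Y : L, ρ ⁅X, Y⁆ = ⁅ρ X, ρ Y⁆)
    -- Leibniz rule of the Lie algebroid
    (hLeib : ∀ (X Y : L) (a : C), ⁅X, a • Y⁆ = a • ⁅X, Y⁆ + (ρ X a) • Y)
    -- the 1-cocycle φ ∈ Γ(A*): C-linear and closed in Lie algebroid cohomology
    (φ : L →ₗ[ℝ] C)
    (hφlin : ∀ (a : C) (X : L), φ (a • X) = a * φ X)
    (hcocycle : ∀ X Y : L, ρ X (φ Y) - ρ Y (φ X) = φ ⁅X, Y⁆)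
    -- derivatives `∂/∂t` on t-dependent sections and functions
    (δ : (ℝ → L) →ₗ[ℝ] (ℝ → L)) (δC : (ℝ → C) →ₗ[ℝ] (ℝ → C))
    (hδbr : ∀ X Y : ℝ → L,
      δ (fun t => ⁅X t, Y t⁆) = fun t => ⁅δ X t, Y t⁆ + ⁅X t, δ Y t⁆)
    (hδsmul : ∀ (f : ℝ → C) (Y : ℝ → L),
      δ (fun t => f t • Y t) = fun t => f t • δ Y t + δC f t • Y t)
    (hδφ : ∀ X : ℝ → L, δC (fun t => φ (X t)) = fun t => φ (δ X t))
    (hδCmul : ∀ f g : ℝ → C,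
      δC (fun t => f t * g t) = fun t => f t * δC g t + δC f t * g t) :
    -- the bracket on t-dependent sections
    let br : (ℝ → L) → (ℝ → L) → (ℝ → L) := fun X Y =>
      fun t => ⁅X t, Y t⁆ + φ (X t) • δ Y t - φ (Y t) • δ X t
    -- skew-symmetry and the Jacobi identity
    (∀ X Y : ℝ → L, br X Y = - br Y X) ∧
    (∀ X Y Z : ℝ → L, br (br X Y) Z + br (br Y Z) X + br (br Z X) Y = 0) := by
  intro br
  have hLeib' : ∀ (X Y : L) (a : C), ⁅a • X, Y⁆ = a • ⁅X, Y⁆ - (ρ Y a) • X := by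
    intro X Y a
    rw [← lie_skew, hLeib, neg_add, ← smul_neg, lie_skew]; abel
  have hδ' : ∀ X Y : ℝ → L, ∀ t,
      δ (br X Y) t = ⁅δ X t, Y t⁆ + ⁅X t, δ Y t⁆
        + (φ (X t) • δ (δ Y) t + φ (δ X t) • δ Y t)
        - (φ (Y t) • δ (δ X) t + φ (δ Y t) • δ X t) := by
    intro X Y t
    have e : br X Y = (fun t => ⁅X t, Y t⁆) + (fun t => φ (X t) • δ Y t)
        - (fun t => φ (Y t) • δ X t) := rfl
    rw [e, map_sub, map_add, hδbr, hδsmul, hδsmul, hδφ, hδφ]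
    simp
  constructor
  · intro X Y
    funext t
    simp only [br, Pi.neg_apply]
    rw [← lie_skew (X t) (Y t)]
    abel
  · intro X Y Z
    funext t
    simp only [Pi.add_apply, Pi.zero_apply]
    show br (br X Y) Z t + br (br Y Z) X t + br (br Z X) Y t = 0
    simp only [br]
    rw [hδ' X Y, hδ' Y Z, hδ' Z X]
    simp only [map_add, map_sub, hφlin]
    simp only [add_lie, sub_lie, lie_add, lie_sub, hLeib, hLeib', smul_add, smul_sub, smul_smul]
    rw [← hcocycle (X t) (Y t), ← hcocycle (Y t) (Z t), ← hcocycle (Z t) (X t)]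
    rw [show ⁅X t, δ Y t⁆ = -⁅δ Y t, X t⁆ from (lie_skew _ _).symm,
        show ⁅Y t, δ Z t⁆ = -⁅δ Z t, Y t⁆ from (lie_skew _ _).symm,
        show ⁅Z t, δ X t⁆ = -⁅δ X t, Z t⁆ from (lie_skew _ _).symm]
    have hb2 : ⁅⁅Y t, Z t⁆, X t⁆ = -⁅X t, ⁅Y t, Z t⁆⁆ := by rw [← lie_skew]
    have hb3 : ⁅⁅Z t, X t⁆, Y t⁆ = ⁅Y t, ⁅X t, Z t⁆⁆ := by
      rw [(lie_skew (X t) (Z t)).symm, lie_neg, ← lie_skew]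
    rw [lie_lie (X t) (Y t) (Z t), hb2, hb3]
    module
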